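/- If an involutive quantaloid Q is modular and tabular, then Q is locally localic: each hom-lattice Q(Y,X) is a frame. -/

import Mathlib

/-!
Tabulate the top element of `Q(X, Y)` by maps `f : U ⟶ Y`, `g : U ⟶ X` (writing `f°` for
`inv f`). The modular law makes `p ↦ 1_U ⊓ g ≫ p ≫ f°` and `e ↦ g° ≫ e ≫ f` mutually inverse
order isomorphisms between `Q(X, Y)` and the subidentities `↓1_U`. In a modular quantaloid the
meet of two subidentities is their composite, and composition distributes over joins, so `↓1_U`
is a frame; hence so is `Q(X, Y)`.
-/

open CategoryTheory

universe v u

structure IsQuantaloid (Q : Type u) [Category.{v} Q] [∀ X Y : Q, CompleteLattice (X ⟶ Y)] :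
    Prop where
  sSup_comp : ∀ {X Y Z : Q} (S : Set (X ⟶ Y)) (g : Y ⟶ Z), sSup S ≫ g = ⨆ f ∈ S, f ≫ g
  comp_sSup : ∀ {X Y Z : Q} (f : X ⟶ Y) (S : Set (Y ⟶ Z)), f ≫ sSup S = ⨆ g ∈ S, f ≫ g

structure IsInvolutiveQuantaloid (Q : Type u) [Category.{v} Q]
    [∀ X Y : Q, CompleteLattice (X ⟶ Y)] (inv : ∀ {X Y : Q}, (X ⟶ Y) → (Y ⟶ X)) : Prop
    extends IsQuantaloid Q where
  inv_inv : ∀ {X Y : Q} (f : X ⟶ Y), inv (inv f) = f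
  inv_comp : ∀ {X Y Z : Q} (f : X ⟶ Y) (g : Y ⟶ Z), inv (f ≫ g) = inv g ≫ inv f
  inv_sSup : ∀ {X Y : Q} (S : Set (X ⟶ Y)), inv (sSup S) = ⨆ f ∈ S, inv f

structure IsModularQuantaloid (Q : Type u) [Category.{v} Q]
    [∀ X Y : Q, CompleteLattice (X ⟶ Y)] (inv : ∀ {X Y : Q}, (X ⟶ Y) → (Y ⟶ X)) : Prop
    extends IsInvolutiveQuantaloid Q inv where
  modular : ∀ {X Y Z : Q} (f : X ⟶ Y) (g : Y ⟶ Z) (h : X ⟶ Z),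
    (f ≫ g) ⊓ h ≤ (f ⊓ (h ≫ inv g)) ≫ g

section Maps

variable {Q : Type u} [Category.{v} Q] [∀ X Y : Q, CompleteLattice (X ⟶ Y)]
  (inv : ∀ {X Y : Q}, (X ⟶ Y) → (Y ⟶ X))

/-- A map in the sense of allegories: a morphism left adjoint to its involute. -/
structure IsMap {X Y : Q} (h : X ⟶ Y) : Prop where
  id_le_comp_inv : 𝟙 X ≤ h ≫ inv h
  inv_comp_le_id : inv h ≫ h ≤ 𝟙 Y

structure IsTabulation {X Y U : Q} (q : X ⟶ Y) (f : U ⟶ Y) (g : U ⟶ X) : Prop where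
  isMap_left : IsMap inv f
  isMap_right : IsMap inv g
  inv_comp_eq : inv g ≫ f = q
  comp_inv_inf_comp_inv : (f ≫ inv f) ⊓ (g ≫ inv g) = 𝟙 U

end Maps

theorem monotone_of_map_sSup {α β : Type*} [CompleteLattice α] [CompleteLattice β] {φ : α → β}
    (hφ : ∀ S, φ (sSup S) = ⨆ a ∈ S, φ a) : Monotone φ := by
  intro a b hab
  have h := hφ {a, b}
  rw [sSup_pair, sup_eq_right.mpr hab, iSup_pair] at h
  exact h ▸ le_sup_left

variable {Q : Type u} [Category.{v} Q] [∀ X Y : Q, CompleteLattice (X ⟶ Y)]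
  {inv : ∀ {X Y : Q}, (X ⟶ Y) → (Y ⟶ X)}

namespace IsQuantaloid

theorem comp_le_comp_right (hQ : IsQuantaloid Q) {X Y Z : Q} {a b : X ⟶ Y} (hab : a ≤ b)
    (c : Y ⟶ Z) : a ≫ c ≤ b ≫ c :=
  monotone_of_map_sSup (φ := (· ≫ c)) (hQ.sSup_comp · c) hab

theorem comp_le_comp_left (hQ : IsQuantaloid Q) {X Y Z : Q} (c : X ⟶ Y) {a b : Y ⟶ Z}
    (hab : a ≤ b) : c ≫ a ≤ c ≫ b :=
  monotone_of_map_sSup (φ := (c ≫ ·)) (hQ.comp_sSup c) hab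

end IsQuantaloid

namespace IsInvolutiveQuantaloid

theorem inv_le_inv (hQ : IsInvolutiveQuantaloid Q inv) {X Y : Q} {a b : X ⟶ Y} (hab : a ≤ b) :
    inv a ≤ inv b :=
  monotone_of_map_sSup hQ.inv_sSup hab

theorem inv_inf (hQ : IsInvolutiveQuantaloid Q inv) {X Y : Q} (a b : X ⟶ Y) :
    inv (a ⊓ b) = inv a ⊓ inv b := by
  have le : ∀ {X Y : Q} (a b : X ⟶ Y), inv (a ⊓ b) ≤ inv a ⊓ inv b := fun _ _ =>
    le_inf (hQ.inv_le_inv inf_le_left) (hQ.inv_le_inv inf_le_right)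
  refine le_antisymm (le a b) ?_
  simpa only [hQ.inv_inv] using hQ.inv_le_inv (le (inv a) (inv b))

theorem inv_id (hQ : IsInvolutiveQuantaloid Q inv) (X : Q) : inv (𝟙 X) = 𝟙 X := by
  simpa only [hQ.inv_inv, Category.comp_id] using (hQ.inv_comp (inv (𝟙 X)) (𝟙 X)).symm

theorem inv_le_id (hQ : IsInvolutiveQuantaloid Q inv) {X : Q} {e : X ⟶ X} (he : e ≤ 𝟙 X) :
    inv e ≤ 𝟙 X :=
  hQ.inv_id X ▸ hQ.inv_le_inv he

end IsInvolutiveQuantaloid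

namespace IsModularQuantaloid

theorem modular_dual (hQ : IsModularQuantaloid Q inv) {X Y Z : Q} (a : X ⟶ Y) (b : Y ⟶ Z) (c : X ⟶ Z) :
    (a ≫ b) ⊓ c ≤ a ≫ (b ⊓ (inv a ≫ c)) := by
  have h := hQ.inv_le_inv (hQ.modular (inv b) (inv a) (inv c))
  simpa only [hQ.inv_comp, hQ.inv_inf, hQ.inv_inv] using h

end IsModularQuantaloid

namespace IsModularQuantaloid

theorem le_inv_of_adjunction (hQ : IsModularQuantaloid Q inv) {X Y : Q} {h : X ⟶ Y}
    {hs : Y ⟶ X} (hu : 𝟙 X ≤ h ≫ hs) (hc : hs ≫ h ≤ 𝟙 Y) : hs ≤ inv h := by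
  have hunit : 𝟙 X ≤ h ≫ (hs ⊓ inv h) := by
    simpa only [inf_eq_right.mpr hu, Category.comp_id] using hQ.modular_dual h hs (𝟙 X)
  calc hs = hs ≫ 𝟙 X := (Category.comp_id hs).symm
    _ ≤ hs ≫ h ≫ (hs ⊓ inv h) := hQ.comp_le_comp_left hs hunit
    _ = (hs ≫ h) ≫ (hs ⊓ inv h) := (Category.assoc _ _ _).symm
    _ ≤ 𝟙 Y ≫ (hs ⊓ inv h) := hQ.comp_le_comp_right hc _
    _ = hs ⊓ inv h := Category.id_comp _
    _ ≤ inv h := inf_le_right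

theorem eq_inv_of_adjunction (hQ : IsModularQuantaloid Q inv) {X Y : Q} {h : X ⟶ Y}
    {hs : Y ⟶ X} (hu : 𝟙 X ≤ h ≫ hs) (hc : hs ≫ h ≤ 𝟙 Y) : hs = inv h := by
  refine le_antisymm (hQ.le_inv_of_adjunction hu hc) ?_
  have hu' : 𝟙 X ≤ inv hs ≫ inv h := by
    simpa only [hQ.inv_id, hQ.inv_comp] using hQ.inv_le_inv hu
  have hc' : inv h ≫ inv hs ≤ 𝟙 Y := by
    simpa only [hQ.inv_id, hQ.inv_comp] using hQ.inv_le_inv hc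
  simpa only [hQ.inv_inv] using hQ.le_inv_of_adjunction hu' hc'

theorem isMap_of_adjunction (hQ : IsModularQuantaloid Q inv) {X Y : Q} {h : X ⟶ Y}
    {hs : Y ⟶ X} (hu : 𝟙 X ≤ h ≫ hs) (hc : hs ≫ h ≤ 𝟙 Y) : IsMap inv h := by
  obtain rfl := hQ.eq_inv_of_adjunction hu hc
  exact ⟨hu, hc⟩

theorem comp_eq_inf_of_le_id (hQ : IsModularQuantaloid Q inv) {X : Q} {e e' : X ⟶ X}
    (he : e ≤ 𝟙 X) (he' : e' ≤ 𝟙 X) : e ≫ e' = e ⊓ e' := by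
  refine le_antisymm (le_inf ?_ ?_) ?_
  · simpa only [Category.comp_id] using hQ.comp_le_comp_left e he'
  · simpa only [Category.id_comp] using hQ.comp_le_comp_right he e'
  · calc e ⊓ e' = (e ≫ 𝟙 X) ⊓ e' := by rw [Category.comp_id]
      _ ≤ e ≫ (𝟙 X ⊓ (inv e ≫ e')) := hQ.modular_dual _ _ _
      _ ≤ e ≫ (𝟙 X ≫ e') :=
          hQ.comp_le_comp_left e (inf_le_right.trans (hQ.comp_le_comp_right (hQ.inv_le_id he) e'))
      _ = e ≫ e' := by rw [Category.id_comp]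

theorem comp_inf_id_le (hQ : IsModularQuantaloid Q inv) {X : Q} {e : X ⟶ X} (he : e ≤ 𝟙 X)
    (x : X ⟶ X) : (e ≫ x) ⊓ 𝟙 X ≤ e :=
  calc (e ≫ x) ⊓ 𝟙 X ≤ e ≫ (x ⊓ (inv e ≫ 𝟙 X)) := hQ.modular_dual _ _ _
    _ ≤ e ≫ 𝟙 X := hQ.comp_le_comp_left e (inf_le_right.trans (by simpa using hQ.inv_le_id he))
    _ = e := Category.comp_id e

theorem comp_inf_id_le' (hQ : IsModularQuantaloid Q inv) {X : Q} {e : X ⟶ X} (he : e ≤ 𝟙 X)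
    (x : X ⟶ X) : (x ≫ e) ⊓ 𝟙 X ≤ e :=
  calc (x ≫ e) ⊓ 𝟙 X ≤ (x ⊓ (𝟙 X ≫ inv e)) ≫ e := hQ.modular _ _ _
    _ ≤ 𝟙 X ≫ e := hQ.comp_le_comp_right (inf_le_right.trans (by simpa using hQ.inv_le_id he)) e
    _ = e := Category.id_comp e

/-- Subidentities compose by meets, so composition distributing over joins is the frame law. -/
theorem frameMinimalAxiomsIic (hQ : IsModularQuantaloid Q inv) (X : Q) :
    Order.Frame.MinimalAxioms (Set.Iic (𝟙 X)) where
  inf_sSup_le_iSup_inf e S := by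
    have hS : sSup (Subtype.val '' S) ≤ 𝟙 X := sSup_le (by rintro _ ⟨b, -, rfl⟩; exact b.2)
    rw [← Subtype.coe_le_coe, Set.Iic.coe_inf, Set.Iic.coe_sSup,
      ← hQ.comp_eq_inf_of_le_id e.2 hS, hQ.comp_sSup, iSup_image]
    refine iSup₂_le fun b hb => ?_
    rw [hQ.comp_eq_inf_of_le_id e.2 b.2, ← Set.Iic.coe_inf, Subtype.coe_le_coe]
    exact le_iSup₂ (f := fun b _ => e ⊓ b) b hb

end IsModularQuantaloid

namespace IsTabulation

variable {X Y U : Q} {f : U ⟶ Y} {g : U ⟶ X}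

theorem inv_comp_inf_comp_eq (ht : IsTabulation inv (⊤ : X ⟶ Y) f g)
    (hQ : IsModularQuantaloid Q inv) (p : X ⟶ Y) :
    inv g ≫ (𝟙 U ⊓ (g ≫ p ≫ inv f)) ≫ f = p := by
  refine le_antisymm ?_ ?_
  · calc inv g ≫ (𝟙 U ⊓ (g ≫ p ≫ inv f)) ≫ f ≤ inv g ≫ (g ≫ p ≫ inv f) ≫ f :=
          hQ.comp_le_comp_left _ (hQ.comp_le_comp_right inf_le_right f)
      _ = (inv g ≫ g) ≫ p ≫ (inv f ≫ f) := by simp only [Category.assoc]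
      _ ≤ 𝟙 X ≫ p ≫ 𝟙 Y :=
          (hQ.comp_le_comp_right ht.isMap_right.inv_comp_le_id _).trans
            (hQ.comp_le_comp_left _ (hQ.comp_le_comp_left p ht.isMap_left.inv_comp_le_id))
      _ = p := by rw [Category.id_comp, Category.comp_id]
  · have hcut : inv g ⊓ (p ≫ inv f) ≤ inv g ≫ (𝟙 U ⊓ (g ≫ p ≫ inv f)) := by
      simpa only [Category.comp_id, hQ.inv_inv] using hQ.modular_dual (inv g) (𝟙 U) (p ≫ inv f)
    calc p = (inv g ≫ f) ⊓ p := by rw [ht.inv_comp_eq, top_inf_eq]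
      _ ≤ (inv g ⊓ (p ≫ inv f)) ≫ f := hQ.modular _ _ _
      _ ≤ (inv g ≫ (𝟙 U ⊓ (g ≫ p ≫ inv f))) ≫ f := hQ.comp_le_comp_right hcut f
      _ = inv g ≫ (𝟙 U ⊓ (g ≫ p ≫ inv f)) ≫ f := Category.assoc _ _ _

theorem id_inf_comp_inv_comp_eq {q : X ⟶ Y} (ht : IsTabulation inv q f g)
    (hQ : IsModularQuantaloid Q inv) {e : U ⟶ U} (he : e ≤ 𝟙 U) :
    𝟙 U ⊓ (g ≫ (inv g ≫ e ≫ f) ≫ inv f) = e := by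
  have hassoc : g ≫ (inv g ≫ e ≫ f) ≫ inv f = (g ≫ inv g) ≫ e ≫ (f ≫ inv f) := by
    simp only [Category.assoc]
  rw [hassoc]
  refine le_antisymm ?_ (le_inf he ?_)
  · have hF : (e ≫ f ≫ inv f) ⊓ (g ≫ inv g) ≤ e := by
      refine le_trans (le_inf inf_le_left ?_) (hQ.comp_inf_id_le he _)
      rw [← ht.comp_inv_inf_comp_inv]
      refine inf_le_inf_right _ ?_
      simpa only [Category.id_comp] using hQ.comp_le_comp_right he (f ≫ inv f)
    have hG : 𝟙 U ⊓ ((g ≫ inv g) ≫ e ≫ f ≫ inv f) ≤ (g ≫ inv g) ≫ e :=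
      calc 𝟙 U ⊓ ((g ≫ inv g) ≫ e ≫ f ≫ inv f)
          = ((g ≫ inv g) ≫ e ≫ f ≫ inv f) ⊓ 𝟙 U := inf_comm _ _
        _ ≤ (g ≫ inv g) ≫ ((e ≫ f ≫ inv f) ⊓ (inv (g ≫ inv g) ≫ 𝟙 U)) := hQ.modular_dual _ _ _
        _ = (g ≫ inv g) ≫ ((e ≫ f ≫ inv f) ⊓ (g ≫ inv g)) := by
            rw [Category.comp_id, hQ.inv_comp, hQ.inv_inv]
        _ ≤ (g ≫ inv g) ≫ e := hQ.comp_le_comp_left _ hF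
    exact (le_inf hG inf_le_left).trans (hQ.comp_inf_id_le' he _)
  · calc e = 𝟙 U ≫ e ≫ 𝟙 U := by rw [Category.id_comp, Category.comp_id]
      _ ≤ (g ≫ inv g) ≫ e ≫ (f ≫ inv f) :=
          (hQ.comp_le_comp_right ht.isMap_right.id_le_comp_inv _).trans
            (hQ.comp_le_comp_left _ (hQ.comp_le_comp_left e ht.isMap_left.id_le_comp_inv))

def orderIsoIic (ht : IsTabulation inv (⊤ : X ⟶ Y) f g) (hQ : IsModularQuantaloid Q inv) :
    (X ⟶ Y) ≃o Set.Iic (𝟙 U) :=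
  Equiv.toOrderIso
    { toFun p := ⟨𝟙 U ⊓ (g ≫ p ≫ inv f), inf_le_left⟩
      invFun e := inv g ≫ e.1 ≫ f
      left_inv := ht.inv_comp_inf_comp_eq hQ
      right_inv e := Subtype.ext (ht.id_inf_comp_inv_comp_eq hQ e.2) }
    (fun _ _ h => inf_le_inf_left _ (hQ.comp_le_comp_left g (hQ.comp_le_comp_right h _)))
    (fun _ _ h => hQ.comp_le_comp_left _ (hQ.comp_le_comp_right h f))

theorem frameMinimalAxioms (ht : IsTabulation inv (⊤ : X ⟶ Y) f g)
    (hQ : IsModularQuantaloid Q inv) : Order.Frame.MinimalAxioms (X ⟶ Y) :=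
  Function.frameMinimalAxioms (hQ.frameMinimalAxiomsIic U) (ht.orderIsoIic hQ)
    (ht.orderIsoIic hQ).le_iff_le (ht.orderIsoIic hQ).map_inf (ht.orderIsoIic hQ).map_sSup

end IsTabulation

theorem stmt_8 {Q : Type u} [Category.{v} Q] [∀ X Y : Q, CompleteLattice (X ⟶ Y)]
    (sSup_comp : ∀ {X Y Z : Q} (S : Set (X ⟶ Y)) (g : Y ⟶ Z), sSup S ≫ g = ⨆ f ∈ S, f ≫ g)
    (comp_sSup : ∀ {X Y Z : Q} (f : X ⟶ Y) (S : Set (Y ⟶ Z)), f ≫ sSup S = ⨆ g ∈ S, f ≫ g)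
    (inv : ∀ {X Y : Q}, (X ⟶ Y) → (Y ⟶ X))
    (inv_inv : ∀ {X Y : Q} (f : X ⟶ Y), inv (inv f) = f)
    (inv_comp : ∀ {X Y Z : Q} (f : X ⟶ Y) (g : Y ⟶ Z), inv (f ≫ g) = inv g ≫ inv f)
    (inv_id : ∀ X : Q, inv (𝟙 X) = 𝟙 X)
    (inv_sSup : ∀ {X Y : Q} (S : Set (X ⟶ Y)), inv (sSup S) = ⨆ f ∈ S, inv f)
    (modular : ∀ {X Y Z : Q} (f : X ⟶ Y) (g : Y ⟶ Z) (h : X ⟶ Z),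
      (f ≫ g) ⊓ h ≤ (f ⊓ (h ≫ inv g)) ≫ g)
    (tabular : ∀ {X Y : Q} (q : X ⟶ Y), ∃ (U : Q) (f : U ⟶ Y) (g : U ⟶ X),
        (∃ fs : Y ⟶ U, 𝟙 U ≤ f ≫ fs ∧ fs ≫ f ≤ 𝟙 Y) ∧
        (∃ gs : X ⟶ U, 𝟙 U ≤ g ≫ gs ∧ gs ≫ g ≤ 𝟙 X) ∧
        inv g ≫ f = q ∧ (f ≫ inv f) ⊓ (g ≫ inv g) = 𝟙 U)
    {X Y : Q} (q : X ⟶ Y) (S : Set (X ⟶ Y)) :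
    q ⊓ sSup S = ⨆ r ∈ S, q ⊓ r := by
  have hQ : IsModularQuantaloid Q inv :=
    { sSup_comp, comp_sSup, inv_inv, inv_comp, inv_sSup, modular }
  obtain ⟨U, f, g, ⟨fs, hfu, hfc⟩, ⟨gs, hgu, hgc⟩, htop, hdiag⟩ := tabular (⊤ : X ⟶ Y)
  have ht : IsTabulation inv ⊤ f g :=
    ⟨hQ.isMap_of_adjunction hfu hfc, hQ.isMap_of_adjunction hgu hgc, htop, hdiag⟩
  let := Order.Frame.ofMinimalAxioms (ht.frameMinimalAxioms hQ)
  exact inf_sSup_eq
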